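/- BDLP relative-bound estimate: let a⁻, a⁺ : ℝᵈ → ℝ≥0, constants m, z, b, ϑ > 0, C > ϑ, and suppose (i) ∑_{x∈η}∑_{y∈η\x} a⁺(x−y) ≤ ϑ·∑_{x∈η}∑_{y∈η\x} a⁻(x−y) + b·|η| for all finite η ⊂ ℝᵈ, and (ii) m > C‖a⁻‖₁ + (b+z)/C + ‖a⁺‖₁. Define c(η) = (m + C‖a⁻‖₁ + z/C + ‖a⁺‖₁)|η| + ∑_{x∈η}∑_{y∈η\x} a⁻(x−y) + (1/C)∑_{x∈η}∑_{y∈η\x} a⁺(x−y) and M(η) = m|η| + ∑_{x∈η}∑_{y∈η\x} a⁻(x−y). Then c(η) ≤ (1 + a)·M(η) for all finite η, where a = max{(C‖a⁻‖₁ + (b+z)/C + ‖a⁺‖₁)/m, ϑ/C} < 1. -/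

import Mathlib

/-- Stability trades `F / C` for `(ϑ / C) E + (b / C) n`; both excess terms are then absorbed
into `a` times the reference quantity `m n + E`. -/
theorem le_one_add_mul_of_le_stability {m K z b ϑ C a n E F : ℝ} (hC : 0 < C) (hn : 0 ≤ n)
    (hE : 0 ≤ E) (hF : F ≤ ϑ * E + b * n) (hK : K + (b + z) / C ≤ a * m) (hϑ : ϑ / C ≤ a) :
    (m + K + z / C) * n + E + (1 / C) * F ≤ (1 + a) * (m * n + E) :=
  calc (m + K + z / C) * n + E + (1 / C) * F
      ≤ (m + K + z / C) * n + E + (1 / C) * (ϑ * E + b * n) := by gcongr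
    _ = m * n + E + (K + (b + z) / C) * n + ϑ / C * E := by ring
    _ ≤ m * n + E + a * m * n + a * E := by gcongr
    _ = (1 + a) * (m * n + E) := by ring

theorem bdlp_relative_bound_general (d : ℕ) (am ap : (Fin d → ℝ) → ℝ)
    (ham : ∀ x, 0 ≤ am x)
    (m z b ϑ C nam nap : ℝ) (hm : 0 < m)
    (hϑ : 0 < ϑ) (hϑC : ϑ < C)
    (hstab : ∀ η : Finset (Fin d → ℝ),
      ∑ x ∈ η, ∑ y ∈ η.erase x, ap (x - y)
        ≤ ϑ * ∑ x ∈ η, ∑ y ∈ η.erase x, am (x - y) + b * η.card)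
    (hmain : C * nam + (b + z) / C + nap < m) :
    (∀ η : Finset (Fin d → ℝ),
      (m + C * nam + z / C + nap) * η.card
          + ∑ x ∈ η, ∑ y ∈ η.erase x, am (x - y)
          + (1 / C) * ∑ x ∈ η, ∑ y ∈ η.erase x, ap (x - y)
        ≤ (1 + max ((C * nam + (b + z) / C + nap) / m) (ϑ / C)) *
            (m * η.card + ∑ x ∈ η, ∑ y ∈ η.erase x, am (x - y))) ∧
    max ((C * nam + (b + z) / C + nap) / m) (ϑ / C) < 1 := by
  have hC : 0 < C := hϑ.trans hϑC
  refine ⟨fun η => ?_, max_lt ((div_lt_one hm).2 hmain) ((div_lt_one hC).2 hϑC)⟩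
  have hK := (div_le_iff₀ hm).1 (le_max_left ((C * nam + (b + z) / C + nap) / m) (ϑ / C))
  have hbound := le_one_add_mul_of_le_stability (K := C * nam + nap) hC η.card.cast_nonneg
    (Finset.sum_nonneg fun x _ => Finset.sum_nonneg fun y _ => ham (x - y)) (hstab η)
    ((add_right_comm _ _ _).trans_le hK) (le_max_right _ _)
  rwa [show m + C * nam + z / C + nap = m + (C * nam + nap) + z / C by ring]

/-- BDLP relative-bound estimate verifying condition (E2) for the BDLP environment. -/
theorem bdlp_relative_bound (d : ℕ) (am ap : (Fin d → ℝ) → ℝ)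
    (ham : ∀ x, 0 ≤ am x) (hap : ∀ x, 0 ≤ ap x)
    (m z b ϑ C nam nap : ℝ) (hm : 0 < m) (hz : 0 < z) (hb : 0 < b)
    (hϑ : 0 < ϑ) (hϑC : ϑ < C)
    (hnam : nam = ∫ x, am x) (hnap : nap = ∫ x, ap x)
    (hstab : ∀ η : Finset (Fin d → ℝ),
      ∑ x ∈ η, ∑ y ∈ η.erase x, ap (x - y)
        ≤ ϑ * ∑ x ∈ η, ∑ y ∈ η.erase x, am (x - y) + b * η.card)
    (hmain : C * nam + (b + z) / C + nap < m) :
    (∀ η : Finset (Fin d → ℝ),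
      (m + C * nam + z / C + nap) * η.card
          + ∑ x ∈ η, ∑ y ∈ η.erase x, am (x - y)
          + (1 / C) * ∑ x ∈ η, ∑ y ∈ η.erase x, ap (x - y)
        ≤ (1 + max ((C * nam + (b + z) / C + nap) / m) (ϑ / C)) *
            (m * η.card + ∑ x ∈ η, ∑ y ∈ η.erase x, am (x - y))) ∧
    max ((C * nam + (b + z) / C + nap) / m) (ϑ / C) < 1 :=
  bdlp_relative_bound_general d am ap ham m z b ϑ C nam nap hm hϑ hϑC hstab hmain
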